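/- arXiv:1701.00638 — 6 statements merged into one kernel-verified Lean document; each statement's English description precedes it below -/
import Mathlib

section
/- (Abstract form of the paper's Lemma 'soundness for joinability and confluence'.) Assume completeness holds, s is confluent, and soundness for joinability holds. Then r is confluent: for all a b c : α, if r* a b and r* a c, then b and c are joinable under r (and, more generally, any two elements of α related by the reflexive–transitive closure of the symmetric closure of r are joinable under r). -/
/-- Two elements are joinable under a relation if some element is reachable
from both under its reflexive-transitive closure. -/
def Joinable {γ : Type*} (t : γ → γ → Prop) (a b : γ) : Prop :=
  ∃ c, Relation.ReflTransGen t a c ∧ Relation.ReflTransGen t b c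

/-- A relation is confluent if any two elements reachable from a common
element are joinable. -/
def Confluent {γ : Type*} (t : γ → γ → Prop) : Prop :=
  ∀ a b c : γ, Relation.ReflTransGen t a b → Relation.ReflTransGen t a c →
    Joinable t b c

/-- A relation is terminating if its converse is well-founded. -/
def Terminating {γ : Type*} (t : γ → γ → Prop) : Prop :=
  WellFounded (fun a b => t b a)

/-- An element is a normal form of a relation if no step applies to it. -/
def NormalForm {γ : Type*} (t : γ → γ → Prop) (a : γ) : Prop :=
  ∀ b, ¬ t a b

/-- Abstract form of the paper's lemma "soundness for joinability and
confluence": completeness, confluence of the transformed relation, and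
soundness for joinability imply confluence of the original relation (and,
more generally, joinability of any two convertible elements). -/
theorem soundness_for_joinability_and_confluence
    {α β : Type*} (ι : α → β) (tb : β → α)
    (r : α → α → Prop) (s : β → β → Prop)
    (complete : ∀ a b : α, r a b → Relation.ReflTransGen s (ι a) (ι b))
    (sconf : Confluent s)
    (soundJoin : ∀ a b : α, Joinable s (ι a) (ι b) → Joinable r a b) :
    Confluent r ∧
      ∀ a b : α,
        Relation.ReflTransGen (fun x y => r x y ∨ r y x) a b →
          Joinable r a b := by
  have key : ∀ a b : α,
      Relation.ReflTransGen (fun x y => r x y ∨ r y x) a b →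
        Joinable s (ι a) (ι b) := by
    intro a b h
    induction h with
    | refl => exact ⟨ι a, .refl, .refl⟩
    | tail _ hbc ih =>
      rename_i b c _
      obtain ⟨d, had, hbd⟩ := ih
      cases hbc with
      | inl h =>
        obtain ⟨e, hde, hce⟩ := sconf (ι b) d (ι c) hbd (complete _ _ h)
        exact ⟨e, had.trans hde, hce⟩
      | inr h =>
        exact ⟨d, had, (complete _ _ h).trans hbd⟩
  have conv : ∀ a b : α,
      Relation.ReflTransGen (fun x y => r x y ∨ r y x) a b →
        Joinable r a b := fun a b h => soundJoin a b (key a b h)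
  refine ⟨fun a b c hab hac => ?_, conv⟩
  have hba : Relation.ReflTransGen (fun x y => r x y ∨ r y x) b a :=
    @Std.Symm.symm _ _ (@Relation.ReflTransGen.stdSymm _ _ ⟨fun x y h => Or.symm h⟩) _ _
      (Relation.ReflTransGen.mono (fun x y h => Or.inl h) _ _ hab)
  have hac' : Relation.ReflTransGen (fun x y => r x y ∨ r y x) a c :=
    Relation.ReflTransGen.mono (fun x y h => Or.inl h) _ _ hac
  exact conv b c (hba.trans hac')
end

section
/- (Abstract form of the paper's Lemma 'soundness for joinability'.) Assume s is confluent and terminating and soundness for reductions to normal forms holds. Then soundness for joinability holds: for all a b : α, if ι a and ι b are joinable under s, then a and b are joinable under r. -/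
lemma exists_nf {γ : Type*} {t : γ → γ → Prop} (h : Terminating t) (a : γ) :
    ∃ w, Relation.ReflTransGen t a w ∧ NormalForm t w := by
  induction a using WellFounded.induction h with
  | _ a ih =>
    by_cases hn : NormalForm t a
    · exact ⟨a, .refl, hn⟩
    · simp only [NormalForm, not_forall, not_not] at hn
      obtain ⟨b, hb⟩ := hn
      obtain ⟨w, hw, hn⟩ := ih b hb
      exact ⟨w, .head hb hw, hn⟩

/-- Abstract form of the paper's lemma "soundness for joinability":
if the transformed relation is confluent and terminating and soundness for
reductions to normal forms holds, then soundness for joinability holds. -/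
theorem soundness_for_joinability
    {α β : Type*} (ι : α → β) (tb : β → α)
    (r : α → α → Prop) (s : β → β → Prop)
    (sconf : Confluent s)
    (sterm : Terminating s)
    (soundNF : ∀ (a : α) (w : β),
      Relation.ReflTransGen s (ι a) w → NormalForm s w →
        Relation.ReflTransGen r a (tb w)) :
    ∀ a b : α, Joinable s (ι a) (ι b) → Joinable r a b := by
  intro a b ⟨c, hac, hbc⟩
  obtain ⟨w, hcw, hnf⟩ := exists_nf sterm c
  exact ⟨tb w, soundNF a w (hac.trans hcw) hnf, soundNF b w (hbc.trans hcw) hnf⟩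
end

section
/- (Abstract form of the strategy observation underlying the paper's Lemma 'soundness for confluent and terminating TRSs': in a confluent and terminating system, every reduction to a normal form can be realized by any reduction strategy that can always act on non-normal elements.) Let s' be a sub-relation of s (every s'-step is an s-step) with the same normal forms (an element of β is an s'-normal form if and only if it is an s-normal form). If s is confluent and terminating, then for all u w : β with s* u w and w an s-normal form, also s'* u w. -/
/-- Abstract strategy observation: in a confluent and terminating system,
every reduction to a normal form can be realized by any sub-relation with
the same normal forms. -/
theorem strategy_reaches_normal_form
    {β : Type*} (s s' : β → β → Prop)
    (hsub : ∀ u v : β, s' u v → s u v)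
    (hnf : ∀ u : β, NormalForm s' u ↔ NormalForm s u)
    (sconf : Confluent s)
    (sterm : Terminating s) :
    ∀ u w : β, Relation.ReflTransGen s u w → NormalForm s w →
      Relation.ReflTransGen s' u w := by
  intro u
  induction u using sterm.induction with
  | _ u ih =>
    intro w huw hw
    by_cases hnu : NormalForm s' u
    · have hnu' : NormalForm s u := (hnf u).mp hnu
      cases (Relation.reflTransGen_iff_eq (fun b => hnu' b)).mp huw
      exact .refl
    · simp only [NormalForm, not_forall, not_not] at hnu
      obtain ⟨v, hv⟩ := hnu
      have hsv : s u v := hsub u v hv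
      obtain ⟨c, hvc, hwc⟩ := sconf u v w (Relation.ReflTransGen.single hsv) huw
      cases (Relation.reflTransGen_iff_eq (fun b => hw b)).mp hwc
      exact Relation.ReflTransGen.head hv (ih v hsv w hvc hw)
end

section
/- (Abstract form of the paper's Lemma 'soundness for confluent and terminating TRSs' / Theorem 'soundness for normalizing rewrite sequences'.) Let s' be a sub-relation of s (every s'-step is an s-step) with the same normal forms (an element of β is an s'-normal form if and only if it is an s-normal form), and assume s is confluent and terminating. If soundness of s'-derivations holds (for all a : α and w : β, s'* (ι a) w implies r* a (tb w)), then soundness for reductions to normal forms holds: for all a : α and w : β, if s* (ι a) w and w is an s-normal form, then r* a (tb w). -/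
/-- Abstract form of the paper's lemma "soundness for confluent and
terminating TRSs" / theorem "soundness for normalizing rewrite sequences":
soundness of derivations of a strategy sub-relation with the same normal
forms implies soundness for reductions to normal forms, provided the
transformed relation is confluent and terminating. -/
theorem soundness_for_normalizing_sequences
    {α β : Type*} (ι : α → β) (tb : β → α)
    (r : α → α → Prop) (s s' : β → β → Prop)
    (hsub : ∀ u v : β, s' u v → s u v)
    (hnf : ∀ u : β, NormalForm s' u ↔ NormalForm s u)
    (sconf : Confluent s)
    (sterm : Terminating s)
    (soundStrat : ∀ (a : α) (w : β),
      Relation.ReflTransGen s' (ι a) w → Relation.ReflTransGen r a (tb w)) :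
    ∀ (a : α) (w : β),
      Relation.ReflTransGen s (ι a) w → NormalForm s w →
        Relation.ReflTransGen r a (tb w) := by

  intro a w hsw hnfw
  -- s' is terminating as a subrelation of s
  have sterm' : WellFounded (fun u v => s' v u) :=
    Subrelation.wf (fun {u v} h => hsub v u h) sterm
  -- every element reaches an s'-normal form by s'*
  have hreach : ∀ u : β, ∃ v, Relation.ReflTransGen s' u v ∧ NormalForm s' v := by
    intro u
    induction u using sterm'.induction with
    | _ u ih =>
      by_cases h : NormalForm s' u
      · exact ⟨u, Relation.ReflTransGen.refl, h⟩
      · simp only [NormalForm, not_forall, not_not] at h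
        obtain ⟨v, hv⟩ := h
        obtain ⟨z, hz1, hz2⟩ := ih v hv
        exact ⟨z, Relation.ReflTransGen.head hv hz1, hz2⟩
  obtain ⟨w', hw'1, hw'2⟩ := hreach (ι a)
  have hw'nf : NormalForm s w' := (hnf w').mp hw'2
  have hw's : Relation.ReflTransGen s (ι a) w' :=
    Relation.ReflTransGen.mono (fun u v h => hsub u v h) _ _ hw'1
  obtain ⟨c, hc1, hc2⟩ := sconf (ι a) w w' hsw hw's
  have hwc : w = c := by
    cases hc1.cases_head with
    | inl h => exact h
    | inr h => exact absurd h.choose_spec.1 (hnfw _)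
  have hw'c : w' = c := by
    cases hc2.cases_head with
    | inl h => exact h
    | inr h => exact absurd h.choose_spec.1 (hw'nf _)
  rw [hwc, ← hw'c]
  exact soundStrat a w' hw'1
end

section
/- (Abstract form of the paper's Proposition 'completeness for innermost rewriting'.) Let s' be a sub-relation of s (every s'-step is an s-step) with the same normal forms (an element of β is an s'-normal form if and only if it is an s-normal form). Assume s is confluent and terminating, completeness holds, and soundness of s'-derivations holds (for all a : α and w : β, s'* (ι a) w implies r* a (tb w)). Then for all a b : α such that r* a b and b is an r-normal form, there exists w : β such that s'* (ι a) w, w is an s-normal form, and tb w = b. -/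
/-- Abstract form of the paper's proposition "completeness for innermost
rewriting". -/
theorem completeness_for_innermost
    {α β : Type*} (ι : α → β) (tb : β → α)
    (r : α → α → Prop) (s s' : β → β → Prop)
    (hsub : ∀ u v : β, s' u v → s u v)
    (hnf : ∀ u : β, NormalForm s' u ↔ NormalForm s u)
    (sconf : Confluent s)
    (sterm : Terminating s)
    (complete : ∀ a b : α, r a b → Relation.ReflTransGen s (ι a) (ι b))
    (soundStrat : ∀ (a : α) (w : β),
      Relation.ReflTransGen s' (ι a) w → Relation.ReflTransGen r a (tb w)) :
    ∀ a b : α, Relation.ReflTransGen r a b → NormalForm r b →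
      ∃ w : β, Relation.ReflTransGen s' (ι a) w ∧ NormalForm s w ∧ tb w = b := by

  intro a b hab hbnf
  -- reach an s'-normal form from any element, using termination of s
  have exnf : ∀ u : β, ∃ w, Relation.ReflTransGen s' u w ∧ NormalForm s' w := by
    intro u
    induction u using WellFounded.induction sterm with
    | _ u ih =>
      by_cases h : NormalForm s' u
      · exact ⟨u, Relation.ReflTransGen.refl, h⟩
      · simp only [NormalForm, not_forall, not_not] at h
        obtain ⟨v, hv⟩ := h
        obtain ⟨w, hw, hwnf⟩ := ih v (hsub u v hv)
        exact ⟨w, Relation.ReflTransGen.head hv hw, hwnf⟩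
  obtain ⟨w, haw, hwnf'⟩ := exnf (ι a)
  obtain ⟨w', hbw', hw'nf'⟩ := exnf (ι b)
  have hwnf := (hnf w).mp hwnf'
  have hw'nf := (hnf w').mp hw'nf'
  -- s* (ι a) (ι b)
  have hsab : Relation.ReflTransGen s (ι a) (ι b) := by
    clear hbw' hw'nf' hw'nf hbnf haw hwnf' hwnf
    induction hab with
    | refl => exact Relation.ReflTransGen.refl
    | tail _ h ih => exact ih.trans (complete _ _ h)
  have hsaw : Relation.ReflTransGen s (ι a) w := by
    clear hwnf' hwnf
    induction haw with
    | refl => exact Relation.ReflTransGen.refl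
    | tail _ h ih => exact ih.tail (hsub _ _ h)
  have hsbw' : Relation.ReflTransGen s (ι b) w' := by
    clear haw hw'nf' hw'nf
    induction hbw' with
    | refl => exact Relation.ReflTransGen.refl
    | tail _ h ih => exact ih.tail (hsub _ _ h)
  obtain ⟨c, hc1, hc2⟩ := sconf (ι a) w w' hsaw (hsab.trans hsbw')
  have nfstop : ∀ {x y : β}, NormalForm s x → Relation.ReflTransGen s x y → x = y := by
    intro x y hx hxy
    cases hxy.cases_head with
    | inl h => exact h
    | inr h => exact absurd h.choose_spec.1 (hx _)
  have hcw : w = c := nfstop hwnf hc1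
  have hcw' : w' = c := nfstop hw'nf hc2
  have hww' : w = w' := hcw.trans hcw'.symm
  have hrb : Relation.ReflTransGen r b (tb w') := soundStrat b w' hbw'
  have : b = tb w' := by
    cases hrb.cases_head with
    | inl h => exact h
    | inr h => exact absurd h.choose_spec.1 (hbnf _)
  exact ⟨w, haw, hwnf, by rw [hww', ← this]⟩
end

section
/- (Abstract form of the paper's main confluence theorem obtained via the innermost strategy.) Let s' be a sub-relation of s (every s'-step is an s-step) with the same normal forms (an element of β is an s'-normal form if and only if it is an s-normal form). Assume s is confluent and terminating, completeness holds, and soundness of s'-derivations holds (for all a : α and w : β, s'* (ι a) w implies r* a (tb w)). Then r is confluent: for all a b c : α, if r* a b and r* a c, then b and c are joinable under r. -/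
private lemma nf_of_rtg {γ : Type*} {t : γ → γ → Prop} {a b : γ}
    (h : Relation.ReflTransGen t a b) (hnf : NormalForm t a) : a = b := by
  rcases h.cases_head with rfl | ⟨c, hc, _⟩
  · rfl
  · exact absurd hc (hnf c)

/-- Abstract form of the paper's main confluence theorem obtained via the
innermost strategy. -/
theorem confluence_via_innermost_strategy
    {α β : Type*} (ι : α → β) (tb : β → α)
    (r : α → α → Prop) (s s' : β → β → Prop)
    (hsub : ∀ u v : β, s' u v → s u v)
    (hnf : ∀ u : β, NormalForm s' u ↔ NormalForm s u)
    (sconf : Confluent s)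
    (sterm : Terminating s)
    (complete : ∀ a b : α, r a b → Relation.ReflTransGen s (ι a) (ι b))
    (soundStrat : ∀ (a : α) (w : β),
      Relation.ReflTransGen s' (ι a) w → Relation.ReflTransGen r a (tb w)) :
    Confluent r := by
  -- every element reaches an s'-normal form via s'
  have toNF : ∀ u : β, ∃ n, Relation.ReflTransGen s' u n ∧ NormalForm s' n := by
    intro u
    induction u using sterm.induction with
    | _ u ih =>
      by_cases h : NormalForm s' u
      · exact ⟨u, .refl, h⟩
      · simp only [NormalForm, not_forall, not_not] at h
        obtain ⟨v, hv⟩ := h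
        obtain ⟨n, hn, hnf'⟩ := ih v (hsub u v hv)
        exact ⟨n, .head hv hn, hnf'⟩
  have liftr : ∀ a b : α, Relation.ReflTransGen r a b →
      Relation.ReflTransGen s (ι a) (ι b) := by
    intro a b h
    induction h with
    | refl => exact .refl
    | tail _ hbc ih => exact ih.trans (complete _ _ hbc)
  intro a b c hab hac
  obtain ⟨nb, hnb, hnbnf⟩ := toNF (ι b)
  obtain ⟨nc, hnc, hncnf⟩ := toNF (ι c)
  have hnbs : Relation.ReflTransGen s (ι a) nb :=
    (liftr a b hab).trans (Relation.ReflTransGen.mono (fun u v => hsub u v) _ _ hnb)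
  have hncs : Relation.ReflTransGen s (ι a) nc :=
    (liftr a c hac).trans (Relation.ReflTransGen.mono (fun u v => hsub u v) _ _ hnc)
  obtain ⟨d, hd1, hd2⟩ := sconf _ _ _ hnbs hncs
  have e1 : nb = d := nf_of_rtg hd1 ((hnf nb).mp hnbnf)
  have e2 : nc = d := nf_of_rtg hd2 ((hnf nc).mp hncnf)
  refine ⟨tb nb, soundStrat b nb hnb, ?_⟩
  rw [e1, ← e2]
  exact soundStrat c nc hnc
end
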